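/- Let n, m be coprime positive integers and k a nonzero vector in ℤᵈ. For the pair of modes k₁ = m·k, k₂ = n·k, the smallest total degree |n₁|+|m₁|+|n₂|+|m₂| of a nontrivial monomial relation n₁k₁ − m₁k₁ + n₂k₂ − m₂k₂ = 0 with (n₁−m₁, n₂−m₂) ≠ (0,0) is n + m, achieved by (n₁,m₁,n₂,m₂) = (n,0,0,m). -/
import Mathlib


/-- For coprime positive integers `n, m` and a nonzero `k ∈ ℤᵈ`, among the
monomial relations `(n₁ − m₁)·(m k) + (n₂ − m₂)·(n k) = 0` with
`(n₁ − m₁, n₂ − m₂) ≠ (0, 0)`, the smallest possible total degree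
`n₁ + m₁ + n₂ + m₂` is `n + m`, achieved by `(n₁, m₁, n₂, m₂) = (n, 0, 0, m)`. -/
theorem lowest_order_two_point_phase_correlation (d : ℕ) (k : Fin d → ℤ)
    (hk : k ≠ 0) (n m : ℕ) (hn : 0 < n) (hm : 0 < m) (hcop : Nat.Coprime n m) :
    -- minimality
    (∀ n₁ m₁ n₂ m₂ : ℕ,
        ((n₁ : ℤ) - m₁) • ((m : ℤ) • k) + ((n₂ : ℤ) - m₂) • ((n : ℤ) • k) = 0 →
        ¬((n₁ : ℤ) - m₁ = 0 ∧ (n₂ : ℤ) - m₂ = 0) →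
        n + m ≤ n₁ + m₁ + n₂ + m₂) ∧
    -- achieved by (n, 0, 0, m)
    ((n : ℤ) - (0 : ℕ)) • ((m : ℤ) • k) + ((0 : ℕ) - (m : ℤ)) • ((n : ℤ) • k) = 0 ∧
    ¬((n : ℤ) - (0 : ℕ) = 0 ∧ ((0 : ℕ) : ℤ) - m = 0) ∧
    n + 0 + 0 + m = n + m := by
  obtain ⟨i, hi⟩ : ∃ i, k i ≠ 0 := by
    by_contra h
    push_neg at h
    exact hk (funext h)
  refine ⟨?_, ?_, ?_, rfl⟩
  · intro n₁ m₁ n₂ m₂ hrel hnt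
    set a : ℤ := (n₁ : ℤ) - m₁ with ha
    set b : ℤ := (n₂ : ℤ) - m₂ with hb
    have hcoef : a * m + b * n = 0 := by
      have := congrFun hrel i
      simp only [Pi.add_apply, Pi.smul_apply, Pi.zero_apply, smul_eq_mul] at this
      have h2 : (a * m + b * n) * k i = 0 := by ring_nf; ring_nf at this; linarith
      exact (mul_eq_zero.mp h2).resolve_right hi
    have ha0 : a ≠ 0 := by
      intro h0
      apply hnt
      refine ⟨h0, ?_⟩
      have : b * n = 0 := by rw [h0] at hcoef; linarith
      rcases mul_eq_zero.mp this with h | h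
      · exact h
      · exact absurd h (by exact_mod_cast hn.ne')
    have hb0 : b ≠ 0 := by
      intro h0
      have : a * m = 0 := by rw [h0] at hcoef; linarith
      rcases mul_eq_zero.mp this with h | h
      · exact ha0 h
      · exact absurd h (by exact_mod_cast hm.ne')
    have hdvd_a : (n : ℤ) ∣ a := by
      have : (n : ℤ) ∣ a * m := ⟨-b, by linarith⟩
      exact (Nat.isCoprime_iff_coprime.mpr hcop).dvd_of_dvd_mul_right this
    have hdvd_b : (m : ℤ) ∣ b := by
      have : (m : ℤ) ∣ b * n := ⟨-a, by linarith⟩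
      exact (Nat.isCoprime_iff_coprime.mpr hcop.symm).dvd_of_dvd_mul_right this
    have h1 : (n : ℤ) ≤ |a| := Int.le_of_dvd (abs_pos.mpr ha0) ((dvd_abs _ _).mpr hdvd_a)
    have h2 : (m : ℤ) ≤ |b| := Int.le_of_dvd (abs_pos.mpr hb0) ((dvd_abs _ _).mpr hdvd_b)
    have h3 : |a| ≤ (n₁ : ℤ) + m₁ := by
      rw [abs_sub_le_iff]; constructor <;> omega
    have h4 : |b| ≤ (n₂ : ℤ) + m₂ := by
      rw [abs_sub_le_iff]; constructor <;> omega
    have : (n : ℤ) + m ≤ (n₁ : ℤ) + m₁ + n₂ + m₂ := by linarith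
    exact_mod_cast this
  · funext j
    simp only [Pi.add_apply, Pi.smul_apply, Pi.zero_apply, smul_eq_mul, Nat.cast_zero]
    ring
  · rintro ⟨h1, -⟩
    simp at h1
    omega
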